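/- Let C ⊆ ℤ³ be the configuration consisting of the boundary cells of the 5×5×5 cube {0,…,4}³ (cells with at least one coordinate equal to 0 or 4) together with the eight cells of {1,3}³ (the corners of the concentric 3×3×3 cube). Then in any sequence of 3-loose sliding moves starting from C, no move ever removes a module from or places a module into the central 3×3×3 cube {1,2,3}³; in particular, C cannot be reconfigured into a single straight line of modules by 3-loose sliding moves. -/
import Mathlib


namespace SlidingCubes

/-- A cell of the `d`-dimensional integer lattice. -/
abbrev Cell (d : ℕ) : Type := Fin d → ℤ

/-- Face adjacency: the cells differ by exactly 1 in exactly one coordinate. -/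
def adj {d : ℕ} (a b : Cell d) : Prop :=
  ∃ i, |a i - b i| = 1 ∧ ∀ j, j ≠ i → a j = b j

/-- Edge adjacency: the cells differ by exactly 1 in exactly two coordinates. -/
def edgeAdj {d : ℕ} (a b : Cell d) : Prop :=
  ∃ i j, i ≠ j ∧ |a i - b i| = 1 ∧ |a j - b j| = 1 ∧ ∀ l, l ≠ i → l ≠ j → a l = b l

/-- The axis-aligned `k × ⋯ × k` box of cells whose lowest corner is `c`. -/
def box {d : ℕ} (k : ℕ) (c : Cell d) : Set (Cell d) :=
  {p | ∀ i, c i ≤ p i ∧ p i < c i + k}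

/-- The box `box k c` contains no module of the configuration `C`. -/
def emptyBox {d : ℕ} (k : ℕ) (C : Set (Cell d)) (c : Cell d) : Prop :=
  ∀ p ∈ box k c, p ∉ C

/-- One unit axis-aligned translation step between boxes, landing on a box empty of `C`. -/
def boxStep {d : ℕ} (k : ℕ) (C : Set (Cell d)) (c c' : Cell d) : Prop :=
  adj c c' ∧ emptyBox k C c'

/-- Connectivity of a set of cells under face adjacency. -/
def ConnectedConf {d : ℕ} (S : Set (Cell d)) : Prop :=
  ∀ a ∈ S, ∀ b ∈ S, Relation.ReflTransGen (fun p q => q ∈ S ∧ adj p q) a b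

/-- The (empty) box at `c` is connected to infinity by a sequence of `k×⋯×k` boxes free
of modules of `C`, consecutive boxes differing by a unit axis-aligned translation:
it can reach a box lying beyond all of `C` in some coordinate direction. -/
def boxEscapes {d : ℕ} (k : ℕ) (C : Set (Cell d)) (c : Cell d) : Prop :=
  ∃ c', Relation.ReflTransGen (boxStep k C) c c' ∧ ∃ i, ∀ p ∈ C, p i < c' i

/-- `p` belongs to the outer (infinite) face-adjacency-connected component of the
complement of `C`. -/
def outer {d : ℕ} (C : Set (Cell d)) (p : Cell d) : Prop :=
  p ∉ C ∧ ∃ q, Relation.ReflTransGen (fun u v => v ∉ C ∧ adj u v) p q ∧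
    ∃ i, ∀ r ∈ C, r i < q i

/-- A `k`-loose straight slide in configuration `C`, moving the module at `a`
one unit step to the empty cell `b`: both positions lie in a common `k×⋯×k` box
containing no other module. -/
def LooseStraight {d : ℕ} (k : ℕ) (C : Set (Cell d)) (a b : Cell d) : Prop :=
  a ∈ C ∧ b ∉ C ∧ adj a b ∧
  ∃ c, a ∈ box k c ∧ b ∈ box k c ∧ emptyBox k (C \ {a}) c

/-- A `k`-loose corner slide in configuration `C`, moving the module at `a` by two
consecutive perpendicular unit steps, through the empty cell `m`, to the empty cell `b`,
around a neighboring module `p` (restoring adjacency with it); each unit step is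
contained in a `k×⋯×k` box containing no other module, and the first box can be
translated to the second through boxes containing no other module. -/
def LooseCorner {d : ℕ} (k : ℕ) (C : Set (Cell d)) (a m b : Cell d) : Prop :=
  a ∈ C ∧ m ∉ C ∧ b ∉ C ∧ adj a m ∧ adj m b ∧ edgeAdj a b ∧
  (∃ p ∈ C, adj p a ∧ adj p b) ∧
  ∃ c₁ c₂, a ∈ box k c₁ ∧ m ∈ box k c₁ ∧ m ∈ box k c₂ ∧ b ∈ box k c₂ ∧
    emptyBox k (C \ {a}) c₁ ∧ emptyBox k (C \ {a}) c₂ ∧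
    Relation.ReflTransGen (boxStep k (C \ {a})) c₁ c₂

/-- A `k`-loose sliding move from configuration `C` to `C'`, moving the module at `a`
to the cell `b`; the move keeps the configuration connected. -/
def LooseMoveVia {d : ℕ} (k : ℕ) (C : Set (Cell d)) (a b : Cell d)
    (C' : Set (Cell d)) : Prop :=
  (LooseStraight k C a b ∨ ∃ m, LooseCorner k C a m b) ∧
  C' = insert b (C \ {a}) ∧ ConnectedConf C'

/-- A `k`-loose sliding move from configuration `C` to `C'`. -/
def LooseMove {d : ℕ} (k : ℕ) (C C' : Set (Cell d)) : Prop :=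
  ∃ a b, LooseMoveVia k C a b C'

/-- A `k`-accessible sliding move: a `k`-loose move whose empty `k×⋯×k` box is connected
to infinity through boxes free of modules, both before and after the move. -/
def AccessibleMoveVia {d : ℕ} (k : ℕ) (C : Set (Cell d)) (a b : Cell d)
    (C' : Set (Cell d)) : Prop :=
  LooseMoveVia k C a b C' ∧
  (∃ c, a ∈ box k c ∧ emptyBox k (C \ {a}) c ∧ boxEscapes k (C \ {a}) c) ∧
  (∃ c, b ∈ box k c ∧ emptyBox k (C' \ {b}) c ∧ boxEscapes k (C' \ {b}) c)

/-- A `k`-accessible sliding move from configuration `C` to `C'`. -/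
def AccessibleMove {d : ℕ} (k : ℕ) (C C' : Set (Cell d)) : Prop :=
  ∃ a b, AccessibleMoveVia k C a b C'

/-- `L` is a straight line of `n` consecutive cells in the axis direction `i`. -/
def IsLineDir {d : ℕ} (i : Fin d) (n : ℕ) (L : Set (Cell d)) : Prop :=
  ∃ c : Cell d, L = {p | ∃ t : ℕ, t < n ∧ p = Function.update c i (c i + t)}

/-- `L` is a straight line of `n` consecutive cells in some axis direction. -/
def IsLine {d : ℕ} (n : ℕ) (L : Set (Cell d)) : Prop := ∃ i, IsLineDir i n L

/-- The axis-aligned bounding box of the union of the boxes `box k c₁` and `box k c₂`. -/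
def bboxPair {d : ℕ} (k : ℕ) (c₁ c₂ : Cell d) : Set (Cell d) :=
  {p | ∀ i, min (c₁ i) (c₂ i) ≤ p i ∧ p i < max (c₁ i) (c₂ i) + k}

/-- The configuration `T` has external feature size at least 2:
(a) every empty cell is contained in an empty `2×⋯×2` box; and
(b) for every pair of edge-adjacent empty cells there are empty `2×⋯×2` boxes containing
them that can be slid into each other through empty boxes staying within the bounding
box of their union. -/
def EFS2 {d : ℕ} (T : Set (Cell d)) : Prop :=
  (∀ q, q ∉ T → ∃ c, q ∈ box 2 c ∧ emptyBox 2 T c) ∧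
  (∀ q₁ q₂, q₁ ∉ T → q₂ ∉ T → edgeAdj q₁ q₂ →
    ∃ c₁ c₂, q₁ ∈ box 2 c₁ ∧ q₂ ∈ box 2 c₂ ∧ emptyBox 2 T c₁ ∧ emptyBox 2 T c₂ ∧
      Relation.ReflTransGen
        (fun u v => adj u v ∧ emptyBox 2 T v ∧ box 2 v ⊆ bboxPair 2 c₁ c₂) c₁ c₂)

/-- The cell directly below `p` (in the `z` direction). -/
def below (p : Cell 3) : Cell 3 := Function.update p 2 (p 2 - 1)

/-- The face-adjacency-connected component of `x` within the modules of `R` lying in the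
horizontal layer of `x`. -/
def layerComp (R : Set (Cell 3)) (x : Cell 3) : Set (Cell 3) :=
  {p | Relation.ReflTransGen (fun u v => v ∈ R ∧ v 2 = x 2 ∧ adj u v) x p}

/-- `s` is a slice of `R`: a connected component of the modules of `R` in some horizontal
layer, having at least one module face-adjacent to a cell of the outer empty component. -/
def IsSlice (R : Set (Cell 3)) (s : Set (Cell 3)) : Prop :=
  (∃ x ∈ R, s = layerComp R x) ∧ ∃ m ∈ s, ∃ q, adj m q ∧ outer R q

/-- Adjacency of slices in the slice graph: the two (distinct) slices contain two
(vertically) face-adjacent modules. -/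
def sliceAdj (R : Set (Cell 3)) (s₁ s₂ : Set (Cell 3)) : Prop :=
  IsSlice R s₁ ∧ IsSlice R s₂ ∧ s₁ ≠ s₂ ∧ ∃ p ∈ s₁, ∃ q ∈ s₂, adj p q

/-- A slice is locally maximal: every slice adjacent to it lies at a lower z-coordinate. -/
def LocallyMax (R s : Set (Cell 3)) : Prop :=
  IsSlice R s ∧ ∀ s', sliceAdj R s s' → ∀ p ∈ s', ∀ q ∈ s, p 2 < q 2

/-- A slice is locally minimal: every slice adjacent to it lies at a higher z-coordinate. -/
def LocallyMin (R s : Set (Cell 3)) : Prop :=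
  IsSlice R s ∧ ∀ s', sliceAdj R s s' → ∀ p ∈ s', ∀ q ∈ s, q 2 < p 2

/-- A slice is locally extremal if it is locally maximal or locally minimal. -/
def LocallyExtremal (R s : Set (Cell 3)) : Prop := LocallyMax R s ∨ LocallyMin R s

/-- `s` is a locally maximal slice in the strong sense: every module of `R` outside `s`
that is face-adjacent to a module of `s` lies in the layer directly below `s`. -/
def LocallyMaxSlice (R s : Set (Cell 3)) : Prop :=
  IsSlice R s ∧ ∀ m ∈ R, m ∉ s → (∃ q ∈ s, adj m q) → ∀ q ∈ s, m 2 = q 2 - 1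

/-- A module of the slice `s` is reddish if the cell directly below it is occupied. -/
def reddish (R s : Set (Cell 3)) (m : Cell 3) : Prop := m ∈ s ∧ below m ∈ R

/-- A module of the slice `s` is bluish if the cell directly below it is empty. -/
def bluish (R s : Set (Cell 3)) (m : Cell 3) : Prop := m ∈ s ∧ below m ∉ R

/-- A reddish module is orange if the layer component containing the module below it is
not adjacent to the outer empty component (it is enclosed in a void). -/
def orange (R s : Set (Cell 3)) (m : Cell 3) : Prop :=
  reddish R s m ∧ ∀ p ∈ layerComp R (below m), ∀ q, adj p q → ¬ outer R q

/-- A reddish module is red if it is not orange. -/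
def red (R s : Set (Cell 3)) (m : Cell 3) : Prop := reddish R s m ∧ ¬ orange R s m

/-- A bluish module is green if the cell below it belongs to the outer empty component. -/
def green (R s : Set (Cell 3)) (m : Cell 3) : Prop := bluish R s m ∧ outer R (below m)

/-- A bluish module is blue if the cell below it is empty but not in the outer empty
component. -/
def blue (R s : Set (Cell 3)) (m : Cell 3) : Prop := bluish R s m ∧ ¬ outer R (below m)

/-- One unit step to the left (negative x). -/
def leftOf (p : Cell 3) : Cell 3 := Function.update p 0 (p 0 - 1)
/-- One unit step to the right (positive x). -/
def rightOf (p : Cell 3) : Cell 3 := Function.update p 0 (p 0 + 1)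
/-- One unit step upward (positive y). -/
def upOf (p : Cell 3) : Cell 3 := Function.update p 1 (p 1 + 1)
/-- One unit step downward (negative y). -/
def downOf (p : Cell 3) : Cell 3 := Function.update p 1 (p 1 - 1)

/-- The directed graph `G_s` on the modules of a locally maximal slice `s` of `R`:
leftward edges, upward edges, and edges from the first bluish module of a
bluish-bluish-reddish triple (read left-to-right in a row, or top-to-bottom in a
column) to the reddish module. -/
def gsEdge (R s : Set (Cell 3)) (a b : Cell 3) : Prop :=
  a ∈ s ∧ b ∈ s ∧
  (b = leftOf a ∨ b = upOf a ∨
   (bluish R s a ∧ bluish R s (rightOf a) ∧ reddish R s b ∧ b = rightOf (rightOf a)) ∨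
   (bluish R s a ∧ bluish R s (downOf a) ∧ reddish R s b ∧ b = downOf (downOf a)))

/-- A module of `s` is reachable in `G_s` from some orange module. -/
def reachOrange (R s : Set (Cell 3)) (m : Cell 3) : Prop :=
  ∃ o, orange R s o ∧ Relation.ReflTransGen (gsEdge R s) o m

/-- The set of modules of `s` not reachable in `G_s` from any orange module
(the modules removed by the algorithm). -/
def removedSet (R s : Set (Cell 3)) : Set (Cell 3) :=
  {m | m ∈ s ∧ ¬ reachOrange R s m}

/-- The cell at height `j + 1` directly above `m0`. -/
def aboveCell (m0 : Cell 3) (j : ℕ) : Cell 3 :=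
  Function.update m0 2 (m0 2 + (j : ℤ) + 1)

/-- In the configuration `C`, the module at `x` can travel to the cell `y` via a
sequence of 2-accessible sliding moves moving only this module. -/
def travel (C : Set (Cell 3)) (x y : Cell 3) : Prop :=
  Relation.ReflTransGen
    (fun p q => AccessibleMoveVia 2 ((C \ {x}) ∪ {p}) p q ((C \ {x}) ∪ {q})) x y

/-- The 3D configuration: the boundary cells of the 5×5×5 cube together with the eight
cells of {1,3}³. -/
def hollowCube : Set (Cell 3) :=
  {p | ((∀ i, 0 ≤ p i ∧ p i ≤ 4) ∧ (∃ i, p i = 0 ∨ p i = 4)) ∨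
       (∀ i, p i = 1 ∨ p i = 3)}

/-- The central 3×3×3 cube {1,2,3}³. -/
def centralCube : Set (Cell 3) :=
  {p | ∀ i, 1 ≤ p i ∧ p i ≤ 3}


/-- The eight corner cells of the central cube. -/
def corners : Set (Cell 3) := {p | ∀ i, p i = 1 ∨ p i = 3}

lemma mem_box_iff {k : ℕ} {c p : Cell 3} :
    p ∈ box k c ↔ ∀ i, c i ≤ p i ∧ p i < c i + k := Iff.rfl

lemma mem_central_iff {p : Cell 3} :
    p ∈ centralCube ↔ ∀ i, 1 ≤ p i ∧ p i ≤ 3 := Iff.rfl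

lemma mem_corners_iff {p : Cell 3} :
    p ∈ corners ↔ ∀ i, p i = 1 ∨ p i = 3 := Iff.rfl

/-- The invariant preserved by 3-loose moves. -/
def Inv (D : Set (Cell 3)) : Prop :=
  corners ⊆ D ∧ (∀ p ∈ D, p ∈ centralCube → p ∈ corners) ∧
  (∀ q ∈ corners, ∃ r, adj q r ∧ r ∈ D)

lemma Inv_base : Inv hollowCube := by
  refine ⟨?_, ?_, ?_⟩
  · intro p hp
    exact Or.inr (mem_corners_iff.mp hp)
  · intro p hp hc
    rcases hp with ⟨_, i, hi⟩ | h
    · have := mem_central_iff.mp hc i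
      omega
    · exact h
  · intro q hq
    have hq' := mem_corners_iff.mp hq
    refine ⟨Function.update q 0 (2 * q 0 - 2), ⟨0, ?_, ?_⟩, ?_⟩
    · rw [Function.update_self]
      rcases hq' 0 with h | h <;> rw [h] <;> norm_num
    · intro j hj
      rw [Function.update_of_ne hj]
    · refine Or.inl ⟨?_, ⟨0, ?_⟩⟩
      · intro i
        by_cases hi : i = 0
        · subst hi
          rw [Function.update_self]
          rcases hq' 0 with h | h <;> omega
        · rw [Function.update_of_ne hi]
          rcases hq' i with h | h <;> omega
      · rw [Function.update_self]
        rcases hq' 0 with h | h <;> omega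

lemma step_lemma {D D' : Set (Cell 3)} {a b : Cell 3} (hInv : Inv D)
    (hmv : LooseMoveVia 3 D a b D') :
    a ∉ centralCube ∧ b ∉ centralCube ∧ Inv D' := by
  obtain ⟨hcor, hcen, hnb⟩ := hInv
  obtain ⟨hslide, hD', hconn⟩ := hmv
  have hboxes : a ∈ D ∧ b ∉ D ∧
      (∃ c, a ∈ box 3 c ∧ emptyBox 3 (D \ {a}) c) ∧
      (∃ c, b ∈ box 3 c ∧ emptyBox 3 (D \ {a}) c) := by
    rcases hslide with ⟨ha, hb, _, c, hac, hbc, hce⟩ |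
      ⟨m, ha, hm, hb, _, _, _, _, c₁, c₂, hac1, _, _, hbc2, he1, he2, _⟩
    · exact ⟨ha, hb, ⟨c, hac, hce⟩, ⟨c, hbc, hce⟩⟩
    · exact ⟨ha, hb, ⟨c₁, hac1, he1⟩, ⟨c₂, hbc2, he2⟩⟩
  obtain ⟨haD, hbD, ⟨ca, haca, hea⟩, ⟨cb, hbcb, heb⟩⟩ := hboxes
  have haca' := mem_box_iff.mp haca
  have hbcb' := mem_box_iff.mp hbcb
  -- the moved module is not a corner of the central cube
  have hacor : a ∉ corners := by
    intro hac
    have hac' := mem_corners_iff.mp hac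
    by_cases h1 : ∃ i, ca i = 1
    · -- the box contains another corner
      obtain ⟨i, hi⟩ := h1
      set v := Function.update a i (4 - a i) with hv
      have hvc : v ∈ corners := by
        rw [mem_corners_iff]
        intro j
        by_cases hj : j = i
        · subst hj; rw [hv, Function.update_self]
          rcases hac' j with h | h <;> omega
        · rw [hv, Function.update_of_ne hj]; exact hac' j
      have hvne : v ≠ a := by
        intro h
        have := congrFun h i
        rw [hv, Function.update_self] at this
        rcases hac' i with h' | h' <;> omega
      have hvbox : v ∈ box 3 ca := by
        rw [mem_box_iff]
        intro j
        by_cases hj : j = i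
        · subst hj; rw [hv, Function.update_self]
          rcases hac' j with h | h <;> rw [hi] <;> push_cast <;> omega
        · rw [hv, Function.update_of_ne hj]; exact haca' j
      exact hea v hvbox ⟨hcor hvc, fun h => hvne (Set.mem_singleton_iff.mp h)⟩
    · -- the box isolates `a`, contradicting that `a` has an occupied neighbor
      push_neg at h1
      obtain ⟨r, ⟨i, habs, hoth⟩, hrD⟩ := hnb a hac
      have habs' := (abs_eq (by norm_num : (0:ℤ) ≤ 1)).mp habs
      have hai := hac' i
      have hbi := haca' i
      have hci := h1 i
      have hrne : r ≠ a := by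
        intro h; rw [h] at habs'; omega
      by_cases hmid : r i = 2
      · have hrcen : r ∈ centralCube := by
          rw [mem_central_iff]
          intro j
          by_cases hj : j = i
          · subst hj; omega
          · rw [← hoth j hj]
            rcases hac' j with h | h <;> omega
        have := mem_corners_iff.mp (hcen r hrD hrcen) i
        omega
      · have hrbox : r ∈ box 3 ca := by
          rw [mem_box_iff]
          intro j
          by_cases hj : j = i
          · subst hj; push_cast; push_cast at hbi; omega
          · rw [← hoth j hj]; exact haca' j
        exact hea r hrbox ⟨hrD, fun h => hrne (Set.mem_singleton_iff.mp h)⟩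
  have hacen : a ∉ centralCube := fun h => hacor (hcen a haD h)
  have hbcen : b ∉ centralCube := by
    intro hb
    have hb' := mem_central_iff.mp hb
    set v : Cell 3 := fun i => if cb i ≤ 1 then 1 else 3 with hv
    have hvc : v ∈ corners := by
      rw [mem_corners_iff]
      intro j
      rw [hv]; dsimp only
      split <;> simp
    have hvbox : v ∈ box 3 cb := by
      rw [mem_box_iff]
      intro j
      have h1 := hbcb' j
      have h2 := hb' j
      push_cast at h1 ⊢
      rw [hv]; dsimp only
      split <;> omega
    have hvcen : v ∈ centralCube := by
      rw [mem_central_iff]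
      intro j
      rcases mem_corners_iff.mp hvc j with h | h <;> omega
    have hvne : v ≠ a := fun h => hacen (h ▸ hvcen)
    exact heb v hvbox ⟨hcor hvc, fun h => hvne (Set.mem_singleton_iff.mp h)⟩
  refine ⟨hacen, hbcen, ?_, ?_, ?_⟩
  · -- corners still occupied
    intro p hp
    rw [hD']
    exact Set.mem_insert_of_mem _ ⟨hcor hp, fun h => hacor ((Set.mem_singleton_iff.mp h) ▸ hp)⟩
  · -- central cube still contains only corners
    intro p hp hpc
    rw [hD'] at hp
    rcases hp with rfl | ⟨hpD, _⟩
    · exact absurd hpc hbcen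
    · exact hcen p hpD hpc
  · -- every corner still has an occupied neighbor, via connectivity
    intro q hq
    have hq' := mem_corners_iff.mp hq
    have hcorD' : corners ⊆ D' := by
      intro p hp
      rw [hD']
      exact Set.mem_insert_of_mem _ ⟨hcor hp, fun h => hacor ((Set.mem_singleton_iff.mp h) ▸ hp)⟩
    set q' := Function.update q 0 (4 - q 0) with hq'def
    have hq'c : q' ∈ corners := by
      rw [mem_corners_iff]
      intro j
      by_cases hj : j = 0
      · subst hj; rw [hq'def, Function.update_self]
        rcases hq' 0 with h | h <;> omega
      · rw [hq'def, Function.update_of_ne hj]; exact hq' j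
    have hne : q ≠ q' := by
      intro h
      have := congrFun h 0
      rw [hq'def, Function.update_self] at this
      rcases hq' 0 with h' | h' <;> omega
    rcases (hconn q (hcorD' hq) q' (hcorD' hq'c)).cases_head with heq | ⟨u, ⟨huS, hadj⟩, _⟩
    · exact absurd heq hne
    · exact ⟨u, hadj, huS⟩

lemma Inv_reach {D : Set (Cell 3)}
    (h : Relation.ReflTransGen (LooseMove 3) hollowCube D) : Inv D := by
  induction h with
  | refl => exact Inv_base
  | tail _ h2 ih =>
    obtain ⟨a, b, hmv⟩ := h2
    exact (step_lemma ih hmv).2.2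

/-- impossibility for 3-loose moves in 3D. -/
theorem hollowCube_unreconfigurable :
    (∀ D : Set (Cell 3), Relation.ReflTransGen (LooseMove 3) hollowCube D →
      ∀ a b : Cell 3, ∀ D' : Set (Cell 3), LooseMoveVia 3 D a b D' →
        a ∉ centralCube ∧ b ∉ centralCube) ∧
    ¬ ∃ L : Set (Cell 3), IsLine 106 L ∧
        Relation.ReflTransGen (LooseMove 3) hollowCube L := by
  constructor
  · intro D hD a b D' hmv
    have h := step_lemma (Inv_reach hD) hmv
    exact ⟨h.1, h.2.1⟩
  · rintro ⟨L, ⟨i, c, hL⟩, hreach⟩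
    have hInv := Inv_reach hreach
    have hcorL : corners ⊆ L := hInv.1
    have key : ∀ p ∈ L, ∀ j, j ≠ i → p j = c j := by
      intro p hp j hj
      rw [hL] at hp
      obtain ⟨t, _, rfl⟩ := hp
      rw [Function.update_of_ne hj]
    have h111 : (![1,1,1] : Cell 3) ∈ L := by
      apply hcorL; rw [mem_corners_iff]; intro j; fin_cases j <;> norm_num
    have h311 : (![3,1,1] : Cell 3) ∈ L := by
      apply hcorL; rw [mem_corners_iff]; intro j; fin_cases j <;> norm_num
    have h131 : (![1,3,1] : Cell 3) ∈ L := by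
      apply hcorL; rw [mem_corners_iff]; intro j; fin_cases j <;> norm_num
    fin_cases i
    · have e1 := key _ h111 1 (by decide)
      have e2 := key _ h131 1 (by decide)
      norm_num at e1 e2
      omega
    · have e1 := key _ h111 0 (by decide)
      have e2 := key _ h311 0 (by decide)
      norm_num at e1 e2
      omega
    · have e1 := key _ h111 0 (by decide)
      have e2 := key _ h311 0 (by decide)
      norm_num at e1 e2
      omega


end SlidingCubes
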